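/- Let a finite strategic-form game with players indexed by a finite type ι and nonempty finite strategy sets S i admit a potential function φ for its utilities U. Then every strategy profile s* that maximizes φ over the (finite, nonempty) set of all strategy profiles is a pure Nash equilibrium of the game; in particular, every such finite potential game possesses at least one pure Nash equilibrium. -/

import Mathlib

open Function

section PotentialGame

variable {ι : Type*} [DecidableEq ι] {S : ι → Type*}

def IsPotential (U : ι → (∀ j, S j) → ℝ) (φ : (∀ j, S j) → ℝ) : Prop :=
  ∀ (i : ι) (si' si'' : S i) (s : ∀ j, S j),
    U i (update s i si') - U i (update s i si'') = φ (update s i si') - φ (update s i si'')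

def IsPureNash (U : ι → (∀ j, S j) → ℝ) (s : ∀ j, S j) : Prop :=
  ∀ (i : ι) (si : S i), U i (update s i si) ≤ U i s

variable {U : ι → (∀ j, S j) → ℝ} {φ : (∀ j, S j) → ℝ}

theorem IsPotential.utility_sub_eq (hpot : IsPotential U φ) (s : ∀ j, S j) (i : ι) (si : S i) :
    U i (update s i si) - U i s = φ (update s i si) - φ s := by
  simpa only [update_eq_self] using hpot i si (s i) s

theorem IsPotential.isPureNash_of_forall_le (hpot : IsPotential U φ) {s : ∀ j, S j}
    (hmax : ∀ t, φ t ≤ φ s) : IsPureNash U s := fun i si => by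
  linarith [hpot.utility_sub_eq s i si, hmax (update s i si)]

theorem IsPotential.exists_isPureNash [Finite ι] [∀ i, Finite (S i)] [∀ i, Nonempty (S i)]
    (hpot : IsPotential U φ) : ∃ s, IsPureNash U s :=
  let ⟨s, hmax⟩ := Finite.exists_max φ
  ⟨s, hpot.isPureNash_of_forall_le hmax⟩

end PotentialGame

/-- In a finite potential game, every strategy profile maximizing the potential function is a
pure Nash equilibrium; in particular the game possesses at least one pure Nash equilibrium. -/
theorem potential_game_has_pure_nash
    {ι : Type*} [Fintype ι] [DecidableEq ι]
    {S : ι → Type*} [∀ i, Fintype (S i)] [∀ i, Nonempty (S i)]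
    (U : ι → (∀ j, S j) → ℝ) (φ : (∀ j, S j) → ℝ)
    (hpot : ∀ (i : ι) (si' si'' : S i) (s : ∀ j, S j),
      U i (Function.update s i si') - U i (Function.update s i si'')
        = φ (Function.update s i si') - φ (Function.update s i si'')) :
    (∀ sstar : ∀ j, S j, (∀ s : ∀ j, S j, φ s ≤ φ sstar) →
        ∀ (i : ι) (si : S i), U i (Function.update sstar i si) ≤ U i sstar)
      ∧ ∃ sstar : ∀ j, S j,
          ∀ (i : ι) (si : S i), U i (Function.update sstar i si) ≤ U i sstar :=
  have hpot : IsPotential U φ := hpot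
  ⟨fun _ hmax => hpot.isPureNash_of_forall_le hmax, hpot.exists_isPureNash⟩
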